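/- For all natural numbers p and q, Syr(V^p(8q+1)) = 6q+1 and Syr(V^p(4q+3)) = 6q+5, where V(m) = 4m+1. -/
import Mathlib


def Syr (n : ℕ) : ℕ := ordCompl[2] (3 * n + 1)

lemma ordCompl_four_mul (x : ℕ) : ordCompl[2] (4 * x) = ordCompl[2] x := by
  rcases Nat.eq_zero_or_pos x with rfl | hx
  · simp
  · rw [Nat.ordCompl_mul, show (4:ℕ) = 2^2 from rfl,
      Nat.Prime.factorization_pow Nat.prime_two]
    simp

lemma ordCompl_odd (x : ℕ) (h : Odd x) : ordCompl[2] x = x := by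
  rw [Nat.factorization_eq_zero_of_not_dvd (Nat.two_dvd_ne_zero.mpr (Nat.odd_iff.mp h))]
  simp

lemma Syr_V (m : ℕ) : Syr (4 * m + 1) = Syr m := by
  have : 3 * (4 * m + 1) + 1 = 4 * (3 * m + 1) := by ring
  rw [Syr, this, ordCompl_four_mul, Syr]

theorem stmt_16 : ∀ p q : ℕ,
    Syr ((fun m : ℕ => 4 * m + 1)^[p] (8 * q + 1)) = 6 * q + 1 ∧
    Syr ((fun m : ℕ => 4 * m + 1)^[p] (4 * q + 3)) = 6 * q + 5 := by
  intro p q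
  have key : ∀ n : ℕ, Syr ((fun m : ℕ => 4 * m + 1)^[p] n) = Syr n := by
    intro n
    induction p with
    | zero => simp
    | succ k ih =>
      simp only [Function.iterate_succ_apply']
      rw [Syr_V]; exact ih
  constructor
  · rw [key, Syr, show 3 * (8 * q + 1) + 1 = 4 * (6 * q + 1) by ring, ordCompl_four_mul,
      ordCompl_odd _ ⟨3 * q, by ring⟩]
  · rw [key, Syr, show 3 * (4 * q + 3) + 1 = 2 * (6 * q + 5) by ring]
    have h5 : Odd (6 * q + 5) := ⟨3 * q + 2, by ring⟩
    rw [Nat.ordCompl_mul]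
    norm_num [ordCompl_odd _ h5]
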